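/- For every natural number l, every natural number ν ≥ 2, and every real x with x² ≠ 1, the complementary Legendre polynomials satisfy 𝒫_ν(x,l+1) = 𝒫_ν(x,l) − 2xν·𝒫_{ν−1}(x,l) − (1−x²)ν(ν−1)·𝒫_{ν−2}(x,l). -/

import Mathlib

/-!
Writing `(1 - t²)^(l+1) = (1 - t²) · (1 - t²)^l`, the Leibniz rule for the `ν`-th derivative
stops after three terms because `1 - t²` is quadratic. Multiplying the resulting identity by
`(1 - x²)^(ν - l - 1)` turns each of the three terms into a complementary Legendre polynomial of
index `l`, provided `1 - x² ≠ 0` so that the integer powers combine.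
-/

/-- Complementary Legendre polynomial
`𝒫_ν(x,l) = (1-x²)^(ν-l) · (dᵛ/dtᵛ)(1-t²)^l |_{t=x}` (zpow power). -/
noncomputable def complLegendre (l ν : ℕ) (x : ℝ) : ℝ :=
  (1 - x ^ 2) ^ ((ν : ℤ) - (l : ℤ)) *
    iteratedDeriv ν (fun t : ℝ => (1 - t ^ 2) ^ l) x

open Polynomial

namespace Polynomial

theorem iteratedDeriv_eval {𝕜 : Type*} [NontriviallyNormedField 𝕜] (p : 𝕜[X]) (n : ℕ) (x : 𝕜) :
    iteratedDeriv n (fun x => p.eval x) x = (derivative^[n] p).eval x := by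
  induction n generalizing x with
  | zero => rfl
  | succ n ih =>
    rw [iteratedDeriv_succ, _root_.funext ih, Polynomial.deriv, Function.iterate_succ_apply']

theorem iterate_derivative_one_sub_X_sq_mul {R : Type*} [CommRing R] (q : R[X]) (n : ℕ) :
    derivative^[n + 2] ((1 - X ^ 2) * q) =
      (1 - X ^ 2) * derivative^[n + 2] q - 2 * (n + 2 : R[X]) * X * derivative^[n + 1] q
        - (n + 2 : R[X]) * (n + 1 : R[X]) * derivative^[n] q := by
  have hc : (n + 2).choose 2 * 2 = (n + 2) * (n + 1) := by
    rw [Nat.choose_two_right, Nat.div_mul_cancel (Nat.even_mul_pred_self (n + 2)).two_dvd]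
    rfl
  have hc' := congrArg (Nat.cast : ℕ → R[X]) hc
  push_cast at hc'
  rw [sub_mul, one_mul, mul_comm, iterate_derivative_sub, iterate_derivative_mul_X_pow,
    Nat.min_eq_left (by omega)]
  simp only [Finset.sum_range_succ, Finset.sum_range_zero, Function.iterate_succ,
    Function.comp_apply, Nat.choose_zero_right, Nat.descFactorial_zero, mul_one, tsub_zero,
    zero_add, Nat.choose_one_right, Nat.descFactorial_succ, Nat.add_one_sub_one, pow_one,
    nsmul_eq_mul, Nat.cast_mul, Nat.cast_add, Nat.cast_ofNat, add_tsub_cancel_right, tsub_self,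
    pow_zero, Nat.cast_one]
  linear_combination (-derivative^[n] q) * hc'

end Polynomial

theorem complLegendre_eq_eval (l ν : ℕ) (x : ℝ) :
    complLegendre l ν x =
      (1 - x ^ 2) ^ ((ν : ℤ) - l) * (derivative^[ν] ((1 - X ^ 2) ^ l)).eval x := by
  rw [complLegendre, ← iteratedDeriv_eval]
  simp

theorem complLegendre_l_recursion (l ν : ℕ) (hν : 2 ≤ ν) (x : ℝ) (hx : x ^ 2 ≠ 1) :
    complLegendre (l + 1) ν x
      = complLegendre l ν x - 2 * x * (ν : ℝ) * complLegendre l (ν - 1) x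
        - (1 - x ^ 2) * (ν : ℝ) * ((ν : ℝ) - 1) * complLegendre l (ν - 2) x := by
  obtain ⟨n, rfl⟩ := Nat.exists_eq_add_of_le' hν
  have hu : (1 : ℝ) - x ^ 2 ≠ 0 := sub_ne_zero.mpr hx.symm
  rw [show n + 2 - 1 = n + 1 by omega, Nat.add_sub_cancel]
  simp only [complLegendre_eq_eval, pow_succ' (1 - X ^ 2 : ℝ[X]) l,
    iterate_derivative_one_sub_X_sq_mul, eval_sub, eval_mul]
  push_cast
  rw [show (n + 2 - (l + 1) : ℤ) = n - l + 1 by ring, show (n + 2 - l : ℤ) = n - l + 2 by ring,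
    show (n + 1 - l : ℤ) = n - l + 1 by ring]
  simp only [zpow_add₀ hu, zpow_ofNat, pow_one, eval_one, eval_pow, eval_X, eval_ofNat, eval_add,
    eval_natCast]
  ring
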